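/- (Certifying positivity) Let F be a real square polynomial system and I a strong interval approximate zero satisfying the reality condition {z̄ : z ∈ K_{x,Y}(I)} ⊆ I. If every coordinate interval of Re(I) is contained in the positive reals, then the unique zero of F in I is real with all coordinates strictly positive. -/

import Mathlib

open Set Pointwise

noncomputable section

/-- Pointwise addition of sets of reals. -/
def sadd (X Y : Set ℝ) : Set ℝ := Set.image2 (· + ·) X Y

/-- Pointwise subtraction of sets of reals. -/
def ssub (X Y : Set ℝ) : Set ℝ := Set.image2 (· - ·) X Y

/-- Pointwise multiplication of sets of reals. -/
def smul' (X Y : Set ℝ) : Set ℝ := Set.image2 (· * ·) X Y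

/-- The rectangular complex interval `X + iY`. -/
def cI (X Y : Set ℝ) : Set ℂ := {z | z.re ∈ X ∧ z.im ∈ Y}

/-- Real parts of a set of complex numbers. -/
def reS (S : Set ℂ) : Set ℝ := Complex.re '' S

/-- Imaginary parts of a set of complex numbers. -/
def imS (S : Set ℂ) : Set ℝ := Complex.im '' S

/-- Complex interval multiplication:
`(X+iY)·(W+iZ) = (X·W − Y·Z) + i(X·Z + Y·W)`. -/
def cmul (S T : Set ℂ) : Set ℂ :=
  cI (ssub (smul' (reS S) (reS T)) (smul' (imS S) (imS T)))
     (sadd (smul' (reS S) (imS T)) (smul' (imS S) (reS T)))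

/-- `S` is a rectangular complex interval. -/
def IsRect (S : Set ℂ) : Prop :=
  ∃ a b c d : ℝ, a ≤ b ∧ c ≤ d ∧ S = cI (Set.Icc a b) (Set.Icc c d)

variable {n : ℕ}

/-- The interval vector `I ∈ 𝕀ℂⁿ` determined by coordinate intervals `IV`. -/
def boxSet (IV : Fin n → Set ℂ) : Set (Fin n → ℂ) := {z | ∀ j, z j ∈ IV j}

/-- `F` is a square polynomial system. -/
def IsPolyMap (F : (Fin n → ℂ) → Fin n → ℂ) : Prop :=
  ∀ i, ∃ p : MvPolynomial (Fin n) ℂ, ∀ z, F z i = MvPolynomial.eval z p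

/-- The Jacobian matrix `JF(z)` of `F` at `z`. -/
def jac (F : (Fin n → ℂ) → Fin n → ℂ) (z : Fin n → ℂ) : Matrix (Fin n) (Fin n) ℂ :=
  fun i j => fderiv ℂ (fun w => F w i) z (Pi.single j 1)

/-- Entries of the interval matrix `1ₙ − Y·□JF(I)`, where `MJ` is the interval
enclosure of the Jacobian on `I`, computed in complex interval arithmetic. -/
def Bmat (Y : Matrix (Fin n) (Fin n) ℂ) (MJ : Fin n → Fin n → Set ℂ) :
    Fin n → Fin n → Set ℂ :=
  fun i j => ({(if i = j then (1 : ℂ) else 0)} : Set ℂ) - ∑ k, cmul {Y i k} (MJ k j)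

/-- Coordinates of the Krawczyk set
`K_{x,Y}(I) = x − Y·□F(x) + (1ₙ − Y·□JF(I))(I − x)`, where `FX` is the interval
enclosure `□F(x)` and `MJ` the interval enclosure `□JF(I)`. -/
def Kset (x : Fin n → ℂ) (Y : Matrix (Fin n) (Fin n) ℂ)
    (FX : Fin n → Set ℂ) (MJ : Fin n → Fin n → Set ℂ) (IV : Fin n → Set ℂ) :
    Fin n → Set ℂ :=
  fun i => (({x i} : Set ℂ) - ∑ j, cmul {Y i j} (FX j)) +
      ∑ j, cmul ((IV j) - {x j}) (Bmat Y MJ i j)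

/-- The `∞`-operator norm of a complex matrix (`Fin n → ℂ` carries the max norm). -/
def opNormInf (M : Matrix (Fin n) (Fin n) ℂ) : ℝ :=
  sSup {r | ∃ v : Fin n → ℂ, ‖v‖ = 1 ∧ r = ‖M.mulVec v‖}

/-- The norm `‖A‖_∞` of an interval matrix: the maximum of the `∞`-operator norms
over all matrices contained in it. -/
def imatNorm (B : Fin n → Fin n → Set ℂ) : ℝ :=
  sSup {r | ∃ M : Matrix (Fin n) (Fin n) ℂ, (∀ i j, M i j ∈ B i j) ∧ r = opNormInf M}

/-- `F` is a square polynomial system with real coefficients. -/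
def IsRealPolyMap (F : (Fin n → ℂ) → Fin n → ℂ) : Prop :=
  ∀ i, ∃ p : MvPolynomial (Fin n) ℝ,
    ∀ z, F z i = MvPolynomial.eval z (MvPolynomial.map (algebraMap ℝ ℂ) p)

/-!
A zero `z ∈ I` satisfies `z = x - Y F(x) + (1 - Y A)(z - x)` for the averaged Jacobian `A` along
`[x, z]`, so `z ∈ K_{x,Y}(I)` and hence `z̄ ∈ I`. Since `F` has real coefficients, `z̄` is again a
zero. Two zeros `u, w ∈ I` give `(1 - Y A')(w - u) = w - u` with `1 - Y A'` in the interval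
matrix `1 - Y·□JF(I)`, whose norm is `< 1`, so `u = w`. Thus `z = z̄` is real, and its real parts
lie in `Re(I) ⊆ (0, ∞)`.
-/

open Matrix MeasureTheory

lemma IsRect.isCompact {S : Set ℂ} (h : IsRect S) : IsCompact S := by
  obtain ⟨a, b, c, d, -, -, rfl⟩ := h
  exact isCompact_Icc.reProdIm isCompact_Icc

lemma IsRect.convex {S : Set ℂ} (h : IsRect S) : Convex ℝ S := by
  obtain ⟨a, b, c, d, -, -, rfl⟩ := h
  exact ((convex_Icc a b).linear_preimage Complex.reLm).inter
    ((convex_Icc c d).linear_preimage Complex.imLm)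

lemma IsCompact.image2_of_continuous {α β γ : Type*} [TopologicalSpace α] [TopologicalSpace β]
    [TopologicalSpace γ] {f : α → β → γ} (hf : Continuous (Function.uncurry f)) {s : Set α}
    {t : Set β} (hs : IsCompact s) (ht : IsCompact t) : IsCompact (image2 f s t) := by
  rw [← image_uncurry_prod]
  exact (hs.prod ht).image hf

lemma IsCompact.cmul {S T : Set ℂ} (hS : IsCompact S) (hT : IsCompact T) :
    IsCompact (cmul S T) := by
  have hre {S} (hS : IsCompact S) : IsCompact (reS S) := hS.image Complex.continuous_re
  have him {S} (hS : IsCompact S) : IsCompact (imS S) := hS.image Complex.continuous_im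
  have hmul {X Y : Set ℝ} (hX : IsCompact X) (hY : IsCompact Y) : IsCompact (smul' X Y) :=
    hX.image2_of_continuous continuous_mul hY
  exact IsCompact.reProdIm
    (.image2_of_continuous continuous_sub (hmul (hre hS) (hre hT)) (hmul (him hS) (him hT)))
    (.image2_of_continuous continuous_add (hmul (hre hS) (him hT)) (hmul (him hS) (hre hT)))

lemma isCompact_finsetSum {ι M : Type*} [AddCommMonoid M] [TopologicalSpace M] [ContinuousAdd M]
    (s : Finset ι) {S : ι → Set M} (hS : ∀ i ∈ s, IsCompact (S i)) :
    IsCompact (∑ i ∈ s, S i) := by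
  classical
  induction s using Finset.induction_on with
  | empty => exact isCompact_singleton
  | insert i s hi ih =>
    rw [Finset.sum_insert hi]
    exact (hS i (s.mem_insert_self i)).add (ih fun j hj => hS j (Finset.mem_insert_of_mem hj))

lemma isCompact_Bmat (Y : Matrix (Fin n) (Fin n) ℂ) {MJ : Fin n → Fin n → Set ℂ}
    (hMJ : ∀ i j, IsCompact (MJ i j)) (i j : Fin n) : IsCompact (Bmat Y MJ i j) := by
  rw [Bmat, ← image2_sub]
  exact isCompact_singleton.image2_of_continuous continuous_sub
    (isCompact_finsetSum _ fun k _ => isCompact_singleton.cmul (hMJ k j))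

lemma mul_mem_cmul {S T : Set ℂ} {a b : ℂ} (ha : a ∈ S) (hb : b ∈ T) : a * b ∈ cmul S T :=
  ⟨⟨a.re * b.re, mem_image2_of_mem (mem_image_of_mem _ ha) (mem_image_of_mem _ hb),
      a.im * b.im, mem_image2_of_mem (mem_image_of_mem _ ha) (mem_image_of_mem _ hb),
      (Complex.mul_re a b).symm⟩,
    ⟨a.re * b.im, mem_image2_of_mem (mem_image_of_mem _ ha) (mem_image_of_mem _ hb),
      a.im * b.re, mem_image2_of_mem (mem_image_of_mem _ ha) (mem_image_of_mem _ hb),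
      (Complex.mul_im a b).symm⟩⟩

lemma sum_mul_mem_sum_cmul {ι : Type*} (s : Finset ι) {S T : ι → Set ℂ} {a b : ι → ℂ}
    (ha : ∀ i, a i ∈ S i) (hb : ∀ i, b i ∈ T i) :
    ∑ i ∈ s, a i * b i ∈ ∑ i ∈ s, cmul (S i) (T i) :=
  Set.finsetSum_mem_finsetSum s _ _ fun i _ => mul_mem_cmul (ha i) (hb i)

lemma one_sub_mul_mem_Bmat {Y A : Matrix (Fin n) (Fin n) ℂ} {MJ : Fin n → Fin n → Set ℂ}
    (hA : ∀ i j, A i j ∈ MJ i j) (i j : Fin n) : (1 - Y * A) i j ∈ Bmat Y MJ i j := by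
  rw [Matrix.sub_apply, Matrix.one_apply, Matrix.mul_apply]
  exact sub_mem_sub rfl (sum_mul_mem_sum_cmul _ (fun _ => rfl) (hA · j))

/-- The Krawczyk identity `z = x - Y f + (1 - Y A)(z - x)`, valid when `f = -A (z - x)`,
places `z` in the Krawczyk set. -/
lemma mem_Kset {x z f : Fin n → ℂ} {Y A : Matrix (Fin n) (Fin n) ℂ} {FX IV : Fin n → Set ℂ}
    {MJ : Fin n → Fin n → Set ℂ} (hf : ∀ j, f j ∈ FX j) (hA : ∀ i j, A i j ∈ MJ i j)
    (hz : z ∈ boxSet IV) (hfA : f = -(A *ᵥ (z - x))) (i : Fin n) :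
    z i ∈ Kset x Y FX MJ IV i := by
  have key : z = x - Y *ᵥ f + (1 - Y * A) *ᵥ (z - x) := by
    rw [hfA, Matrix.mulVec_neg, Matrix.sub_mulVec, Matrix.one_mulVec, ← Matrix.mulVec_mulVec]
    abel
  rw [key]
  simp only [Pi.add_apply, Pi.sub_apply, Matrix.mulVec, dotProduct, mul_comm _ (z _ - x _)]
  exact add_mem_add (sub_mem_sub rfl (sum_mul_mem_sum_cmul _ (fun _ => rfl) hf))
    (sum_mul_mem_sum_cmul _ (fun j => sub_mem_sub (hz j) rfl) (one_sub_mul_mem_Bmat hA i))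

lemma norm_mulVec_le_sum_norm (M : Matrix (Fin n) (Fin n) ℂ) {v : Fin n → ℂ} (hv : ‖v‖ ≤ 1) :
    ‖M *ᵥ v‖ ≤ ∑ i, ∑ j, ‖M i j‖ := by
  refine (pi_norm_le_iff_of_nonneg (by positivity)).2 fun i => ?_
  calc ‖(M *ᵥ v) i‖ ≤ ∑ j, ‖M i j‖ * ‖v j‖ := by
        simpa only [Matrix.mulVec, dotProduct, norm_mul] using
          norm_sum_le Finset.univ fun j => M i j * v j
    _ ≤ ∑ j, ‖M i j‖ := by
        gcongr with j
        exact mul_le_of_le_one_right (norm_nonneg _) ((norm_le_pi_norm v j).trans hv)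
    _ ≤ ∑ i, ∑ j, ‖M i j‖ :=
        Finset.single_le_sum (f := fun i => ∑ j, ‖M i j‖) (fun i _ => by positivity)
          (Finset.mem_univ i)

lemma opNormInf_nonneg (M : Matrix (Fin n) (Fin n) ℂ) : 0 ≤ opNormInf M :=
  Real.sSup_nonneg fun _ ⟨_, _, hr⟩ => hr ▸ norm_nonneg _

lemma opNormInf_le_sum_norm (M : Matrix (Fin n) (Fin n) ℂ) :
    opNormInf M ≤ ∑ i, ∑ j, ‖M i j‖ :=
  Real.sSup_le (fun _ ⟨_, hv, hr⟩ => hr ▸ norm_mulVec_le_sum_norm M hv.le) (by positivity)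

lemma one_le_opNormInf_of_mulVec_eq_self {M : Matrix (Fin n) (Fin n) ℂ} {v : Fin n → ℂ}
    (hv : v ≠ 0) (hMv : M *ᵥ v = v) : 1 ≤ opNormInf M := by
  have hv' : ‖v‖ ≠ 0 := norm_ne_zero_iff.2 hv
  set u : Fin n → ℂ := (‖v‖⁻¹ : ℂ) • v
  have hu : ‖u‖ = 1 := by
    rw [norm_smul, norm_inv, Complex.norm_real, norm_norm, inv_mul_cancel₀ hv']
  refine le_csSup ⟨_, fun _ ⟨_, hw, hr⟩ => hr ▸ norm_mulVec_le_sum_norm M hw.le⟩ ⟨u, hu, ?_⟩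
  rw [Matrix.mulVec_smul, hMv, hu]

lemma opNormInf_le_imatNorm {B : Fin n → Fin n → Set ℂ}
    (hB : ∀ i j, Bornology.IsBounded (B i j)) {M : Matrix (Fin n) (Fin n) ℂ}
    (hM : ∀ i j, M i j ∈ B i j) : opNormInf M ≤ imatNorm B := by
  choose C hC using fun i j => (hB i j).exists_norm_le
  refine le_csSup ⟨∑ i, ∑ j, C i j, ?_⟩ ⟨M, hM, rfl⟩
  rintro _ ⟨M', hM', rfl⟩
  exact (opNormInf_le_sum_norm M').trans (by gcongr with i _ j _; exact hC i j _ (hM' i j))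

lemma imatNorm_nonneg (B : Fin n → Fin n → Set ℂ) : 0 ≤ imatNorm B :=
  Real.sSup_nonneg fun _ ⟨M, _, hr⟩ => hr ▸ opNormInf_nonneg M

lemma eq_zero_of_mulVec_eq_self {B : Fin n → Fin n → Set ℂ}
    (hB : ∀ i j, Bornology.IsBounded (B i j)) (hB1 : imatNorm B < 1)
    {M : Matrix (Fin n) (Fin n) ℂ} (hM : ∀ i j, M i j ∈ B i j) {v : Fin n → ℂ}
    (hMv : M *ᵥ v = v) : v = 0 := by
  by_contra hv
  exact (one_le_opNormInf_of_mulVec_eq_self hv hMv).trans (opNormInf_le_imatNorm hB hM)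
    |>.not_gt hB1

lemma IsRealPolyMap.contDiff {F : (Fin n → ℂ) → Fin n → ℂ} (hF : IsRealPolyMap F) (i : Fin n) :
    ContDiff ℂ 1 fun z => F z i := by
  obtain ⟨p, hp⟩ := hF i
  simp only [hp]
  exact (AnalyticOnNhd.eval_mvPolynomial _).contDiff

lemma IsRealPolyMap.apply_star {F : (Fin n → ℂ) → Fin n → ℂ} (hF : IsRealPolyMap F)
    (z : Fin n → ℂ) : F (star z) = star (F z) := by
  funext i
  obtain ⟨p, hp⟩ := hF i
  rw [Pi.star_apply, hp, hp, MvPolynomial.eval_map, MvPolynomial.eval_map]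
  change _ = starRingEnd ℂ _
  rw [MvPolynomial.eval₂_comp_left]
  congr 1
  ext r
  exact (Complex.conj_ofReal r).symm

lemma fderiv_apply_eq_jac_mulVec (F : (Fin n → ℂ) → Fin n → ℂ) (z v : Fin n → ℂ) (i : Fin n) :
    fderiv ℂ (fun w => F w i) z v = (jac F z *ᵥ v) i := by
  conv_lhs => rw [← Finset.univ_sum_single v, map_sum]
  refine Finset.sum_congr rfl fun j _ => ?_
  rw [show Pi.single j (v j) = v j • Pi.single j (1 : ℂ) by rw [← Pi.single_smul', smul_eq_mul,
    mul_one], map_smul, smul_eq_mul, mul_comm]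
  rfl

lemma continuous_jac_apply {F : (Fin n → ℂ) → Fin n → ℂ} (hF : ∀ i, ContDiff ℂ 1 fun z => F z i)
    (i j : Fin n) : Continuous fun z => jac F z i j :=
  ((hF i).continuous_fderiv one_ne_zero).clm_apply continuous_const

lemma convex_boxSet {IV : Fin n → Set ℂ} (hIV : ∀ j, Convex ℝ (IV j)) :
    Convex ℝ (boxSet IV) :=
  fun _ hu _ hw _ _ ha hb hab j => hIV j (hu j) (hw j) ha hb hab

/-- `A` is the Jacobian averaged along the segment `[u, w]`, hence lies in the convex closed
enclosure `MJ`. -/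
theorem exists_apply_sub_eq_mulVec {F : (Fin n → ℂ) → Fin n → ℂ}
    (hF : ∀ i, ContDiff ℂ 1 fun z => F z i) {S : Set (Fin n → ℂ)} (hS : Convex ℝ S)
    {MJ : Fin n → Fin n → Set ℂ} (hMJc : ∀ i j, Convex ℝ (MJ i j))
    (hMJk : ∀ i j, IsClosed (MJ i j)) (hMJ : ∀ z ∈ S, ∀ i j, jac F z i j ∈ MJ i j)
    {u w : Fin n → ℂ} (hu : u ∈ S) (hw : w ∈ S) :
    ∃ A : Matrix (Fin n) (Fin n) ℂ, (∀ i j, A i j ∈ MJ i j) ∧ F w - F u = A *ᵥ (w - u) := by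
  set γ : ℝ → Fin n → ℂ := fun t => u + t • (w - u)
  have hγ : ∀ t, HasDerivAt γ (w - u) t := fun t => by
    simpa [γ] using ((hasDerivAt_id t).smul_const (w - u)).const_add u
  have hJ : ∀ i j, Continuous fun t => jac F (γ t) i j := fun i j =>
    (continuous_jac_apply hF i j).comp (continuous_const.add (continuous_id.smul continuous_const))
  refine ⟨.of fun i j => ∫ t in (0 : ℝ)..1, jac F (γ t) i j, fun i j => ?_, funext fun i => ?_⟩
  · have : IsProbabilityMeasure (volume.restrict (Ioc (0 : ℝ) 1)) := ⟨by simp⟩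
    rw [Matrix.of_apply, intervalIntegral.integral_of_le zero_le_one]
    refine (hMJc i j).integral_mem (hMJk i j) ?_ (hJ i j).integrableOn_Ioc
    exact (ae_restrict_mem measurableSet_Ioc).mono fun t ht =>
      hMJ _ (hS.add_smul_sub_mem hu hw ⟨ht.1.le, ht.2⟩) i j
  · have hγ0 : γ 0 = u := by simp [γ]
    have hγ1 : γ 1 = w := by simp [γ]
    have hderiv : ∀ t ∈ uIcc (0 : ℝ) 1,
        HasDerivAt (fun t => F (γ t) i) (∑ j, jac F (γ t) i j * (w - u) j) t := fun t _ => by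
      have h := ((((hF i).differentiable one_ne_zero) (γ t)).hasFDerivAt.restrictScalars ℝ
        ).comp_hasDerivAt t (hγ t)
      rwa [ContinuousLinearMap.coe_restrictScalars', fderiv_apply_eq_jac_mulVec] at h
    have hint : ∀ j, IntervalIntegrable (fun t => jac F (γ t) i j * (w - u) j) volume 0 1 :=
      fun j => ((hJ i j).mul continuous_const).intervalIntegrable 0 1
    have hFTC := intervalIntegral.integral_eq_sub_of_hasDerivAt hderiv
      ((continuous_finsetSum (f := fun j t => jac F (γ t) i j * (w - u) j) _
        fun j _ => (hJ i j).mul continuous_const).intervalIntegrable 0 1)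
    rw [hγ0, hγ1, intervalIntegral.integral_finsetSum fun j _ => hint j] at hFTC
    simp only [Pi.sub_apply, ← hFTC, Matrix.mulVec, dotProduct, Matrix.of_apply,
      intervalIntegral.integral_mul_const]

theorem injOn_boxSet {F : (Fin n → ℂ) → Fin n → ℂ} (hF : ∀ i, ContDiff ℂ 1 fun z => F z i)
    {IV : Fin n → Set ℂ} (hIV : ∀ j, Convex ℝ (IV j)) {Y : Matrix (Fin n) (Fin n) ℂ}
    {MJ : Fin n → Fin n → Set ℂ} (hMJc : ∀ i j, Convex ℝ (MJ i j))
    (hMJk : ∀ i j, IsCompact (MJ i j)) (hMJ : ∀ z ∈ boxSet IV, ∀ i j, jac F z i j ∈ MJ i j)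
    (hnorm : imatNorm (Bmat Y MJ) < 1) : InjOn F (boxSet IV) := by
  intro u hu w hw hFuw
  obtain ⟨A, hA, hFA⟩ := exists_apply_sub_eq_mulVec hF (convex_boxSet hIV) hMJc
    (fun i j => (hMJk i j).isClosed) hMJ hu hw
  have hfix : (1 - Y * A) *ᵥ (w - u) = w - u := by
    rw [Matrix.sub_mulVec, Matrix.one_mulVec, ← Matrix.mulVec_mulVec, ← hFA, hFuw, sub_self,
      Matrix.mulVec_zero, sub_zero]
  exact (sub_eq_zero.1 (eq_zero_of_mulVec_eq_self
    (fun i j => (isCompact_Bmat Y hMJk i j).isBounded) hnorm (one_sub_mul_mem_Bmat hA) hfix)).symm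

theorem certify_positivity_general (F : (Fin n → ℂ) → Fin n → ℂ) (hF : IsRealPolyMap F)
    (IV : Fin n → Set ℂ) (hIV : ∀ j, IsRect (IV j))
    (x : Fin n → ℂ) (hx : x ∈ boxSet IV)
    (Y : Matrix (Fin n) (Fin n) ℂ)
    (FX : Fin n → Set ℂ) (hFX : ∀ j, F x j ∈ FX j)
    (MJ : Fin n → Fin n → Set ℂ) (hMJr : ∀ i j, IsRect (MJ i j))
    (hMJ : ∀ z ∈ boxSet IV, ∀ i j, jac F z i j ∈ MJ i j)
    (hnorm : Real.sqrt 2 * imatNorm (Bmat Y MJ) < 1)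
    (hconj : ∀ i, (fun w : ℂ => (starRingEnd ℂ) w) '' Kset x Y FX MJ IV i ⊆ IV i)
    (hpos : ∀ j, ∀ w ∈ IV j, 0 < w.re) :
    ∀ z ∈ boxSet IV, F z = 0 → ∀ j, (z j).im = 0 ∧ 0 < (z j).re := by
  intro z hz hFz
  have hMJc i j : Convex ℝ (MJ i j) := (hMJr i j).convex
  have hMJk i j : IsCompact (MJ i j) := (hMJr i j).isCompact
  obtain ⟨A, hA, hFA⟩ := exists_apply_sub_eq_mulVec hF.contDiff (convex_boxSet fun j =>
    (hIV j).convex) hMJc (fun i j => (hMJk i j).isClosed) hMJ hx hz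
  have hzK i : z i ∈ Kset x Y FX MJ IV i :=
    mem_Kset hFX hA hz (by rw [← hFA, hFz, zero_sub, neg_neg]) i
  have hz_star : star z ∈ boxSet IV := fun i => hconj i ⟨z i, hzK i, rfl⟩
  have hB : imatNorm (Bmat Y MJ) < 1 :=
    (le_mul_of_one_le_left (imatNorm_nonneg _) Real.one_lt_sqrt_two.le).trans_lt hnorm
  have hz_real : star z = z := injOn_boxSet hF.contDiff (fun j => (hIV j).convex) hMJc hMJk hMJ
    hB hz_star hz (by rw [hF.apply_star, hFz, star_zero])
  exact fun j => ⟨Complex.conj_eq_iff_im.1 (congrFun hz_real j), hpos j _ (hz j)⟩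

theorem certify_positivity (F : (Fin n → ℂ) → Fin n → ℂ) (hF : IsRealPolyMap F)
    (IV : Fin n → Set ℂ) (hIV : ∀ j, IsRect (IV j))
    (x : Fin n → ℂ) (hx : x ∈ boxSet IV)
    (Y : Matrix (Fin n) (Fin n) ℂ) (hY : IsUnit Y)
    (FX : Fin n → Set ℂ) (hFXr : ∀ j, IsRect (FX j)) (hFX : ∀ j, F x j ∈ FX j)
    (MJ : Fin n → Fin n → Set ℂ) (hMJr : ∀ i j, IsRect (MJ i j))
    (hMJ : ∀ z ∈ boxSet IV, ∀ i j, jac F z i j ∈ MJ i j)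
    (hK : ∀ i, Kset x Y FX MJ IV i ⊆ IV i)
    (hnorm : Real.sqrt 2 * imatNorm (Bmat Y MJ) < 1)
    (hconj : ∀ i, (fun w : ℂ => (starRingEnd ℂ) w) '' Kset x Y FX MJ IV i ⊆ IV i)
    (hpos : ∀ j, ∀ w ∈ IV j, 0 < w.re) :
    ∀ z ∈ boxSet IV, F z = 0 → ∀ j, (z j).im = 0 ∧ 0 < (z j).re :=
  certify_positivity_general F hF IV hIV x hx Y FX hFX MJ hMJr hMJ hnorm hconj hpos
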